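/- If b ∈ L¹(0,T; ℝ^d), then the deterministic convolution B(t) = ∫_0^t S(t-s) i b(s) ds belongs to V for almost every t ∈ [0,T], and ∫_0^T ‖B(t)‖_V² dt ≤ C(1/2 + T) (∫_0^T |b(s)| ds)². -/

import Mathlib

/-!
Write `B(t)(x) = ∫_0^t e^{-(t-s)x} b(s) ds` and `k(t,x) = ∫_0^t e^{-(t-s)x} |b(s)| ds` (`expConv`).
For `x ≥ 0` the kernel is at most `1`, so `|B(t)(x)| ≤ k(t,x) ≤ ‖b‖₁` and
`|B(t)(x)|² ≤ ‖b‖₁ k(t,x)`. In `t`, `k(·,x)` is the convolution of `|b|` with `e^{-vx}` on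
`[0,T]`, hence `(1+x) ∫_0^T k(t,x) dt ≤ ‖b‖₁ ∫_0^T (1+x) e^{-vx} dv ≤ (1+T) ‖b‖₁`: the weight
`1+x` is absorbed because `∫_0^T x e^{-vx} dv ≤ 1`. Exchanging the `t`- and `x`-integrals (the
measure `μ` on `[0,∞)` is σ-finite since it integrates the positive function `ω`) gives
`∫_0^T ‖B(t)‖_V² dt ≤ (1+T) ‖b‖₁² ∫ ω dμ`. The majorant `‖b‖₁ ∫ (1+x) ω(x) k(t,x) μ(dx)` of
`‖B(t)‖_V²` is measurable in `t` with finite integral, so `‖B(t)‖_V < ∞` for a.e. `t`.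
-/

open MeasureTheory Set ENNReal

/-- The weight function `ω(x) = 1 ∧ x^{-1/2}` (with `ω(x) = 1` for `x ≤ 0`). -/
noncomputable def omg (x : ℝ) : ℝ := if x ≤ 0 then 1 else min 1 (x ^ (-(1:ℝ)/2))

lemma omg_pos (x : ℝ) : 0 < omg x := by
  unfold omg
  split_ifs with hx
  · exact one_pos
  · exact lt_min one_pos (Real.rpow_pos_of_pos (not_le.mp hx) _)

@[fun_prop]
lemma measurable_omg : Measurable omg :=
  Measurable.ite measurableSet_Iic measurable_const
    (measurable_const.min (measurable_id.pow_const _))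

lemma sigmaFinite_of_lintegral_ne_top_of_ne_zero {α : Type*} [MeasurableSpace α]
    {μ : Measure α} {f : α → ℝ≥0∞} (hf : Measurable f) (hf_ne_zero : ∀ x, f x ≠ 0)
    (hf_int : ∫⁻ x, f x ∂μ ≠ ∞) : SigmaFinite μ := by
  have : IsFiniteMeasure (μ.withDensity f) := isFiniteMeasure_withDensity hf_int
  rw [← withDensity_inv_same hf (ae_of_all _ hf_ne_zero) (ae_lt_top hf hf_int).ne_of_lt]
  exact SigmaFinite.withDensity_of_ne_top' fun x ↦ ENNReal.inv_ne_top.mpr (hf_ne_zero x)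

lemma lintegral_lintegral_mul_sub {G : Type*} [MeasurableSpace G] [AddGroup G]
    [MeasurableAdd₂ G] [MeasurableNeg G] (μ : Measure G) [SFinite μ] [μ.IsAddRightInvariant]
    {K f : G → ℝ≥0∞} (hK : Measurable K) (hf : Measurable f) :
    ∫⁻ t, ∫⁻ s, K (t - s) * f s ∂μ ∂μ = (∫⁻ t, K t ∂μ) * ∫⁻ s, f s ∂μ := by
  rw [lintegral_lintegral_swap (by fun_prop), ← lintegral_const_mul _ hf]
  congr 1 with s
  rw [lintegral_mul_const _ (by fun_prop), lintegral_sub_right_eq_self]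

lemma lintegral_one_add_mul_exp_le {x : ℝ} (hx : 0 ≤ x) (T : ℝ) :
    ∫⁻ v in Icc 0 T, ENNReal.ofReal ((1 + x) * Real.exp (-(v * x))) ≤ ENNReal.ofReal (1 + T) := by
  rcases lt_or_ge T 0 with hT | hT
  · simp [Icc_eq_empty_of_lt hT]
  have hderiv : ∀ v, HasDerivAt (fun v ↦ v - Real.exp (-(v * x)))
      (1 + x * Real.exp (-(v * x))) v := fun v ↦
    ((hasDerivAt_id' v).fun_sub ((hasDerivAt_id' v).mul_const x).fun_neg.exp).congr_deriv
      (by ring)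
  have hcont : Continuous fun v ↦ 1 + x * Real.exp (-(v * x)) := by fun_prop
  calc ∫⁻ v in Icc 0 T, ENNReal.ofReal ((1 + x) * Real.exp (-(v * x)))
      ≤ ∫⁻ v in Icc 0 T, ENNReal.ofReal (1 + x * Real.exp (-(v * x))) := by
        refine setLIntegral_mono' measurableSet_Icc fun v hv ↦ ENNReal.ofReal_le_ofReal ?_
        have : Real.exp (-(v * x)) ≤ 1 := Real.exp_le_one_iff.mpr (by nlinarith [hv.1])
        nlinarith
    _ = ENNReal.ofReal (T - Real.exp (-(T * x)) - (0 - Real.exp (-(0 * x)))) := by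
        rw [← ofReal_integral_eq_lintegral_ofReal hcont.integrableOn_Icc
          (ae_of_all _ fun v ↦ by positivity), integral_Icc_eq_integral_Ioc,
          ← intervalIntegral.integral_of_le hT,
          intervalIntegral.integral_eq_sub_of_hasDerivAt (fun v _ ↦ hderiv v)
            (hcont.intervalIntegrable _ _)]
    _ ≤ ENNReal.ofReal (1 + T) := ENNReal.ofReal_le_ofReal (by
        simp only [zero_mul, neg_zero, Real.exp_zero]; linarith [Real.exp_pos (-(T * x))])

noncomputable def expConv (g : ℝ → ℝ≥0∞) (t x : ℝ) : ℝ≥0∞ :=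
  ∫⁻ s in Ioc 0 t, ENNReal.ofReal (Real.exp (-((t - s) * x))) * g s

section expConv

variable {g : ℝ → ℝ≥0∞}

lemma enorm_integral_exp_smul_le_expConv {E : Type*} [NormedAddCommGroup E] [NormedSpace ℝ E]
    (b : ℝ → E) (t x : ℝ) :
    ‖∫ s in Ioc 0 t, Real.exp (-((t - s) * x)) • b s‖ₑ ≤ expConv (fun s ↦ ‖b s‖ₑ) t x := by
  refine (enorm_integral_le_lintegral_enorm _).trans_eq (lintegral_congr fun s ↦ ?_)
  rw [enorm_smul, Real.enorm_eq_ofReal (Real.exp_pos _).le]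

lemma expConv_le_lintegral {t x T : ℝ} (hx : 0 ≤ x) (htT : t ≤ T) :
    expConv g t x ≤ ∫⁻ s in Ioc 0 T, g s :=
  calc expConv g t x ≤ ∫⁻ s in Ioc 0 t, g s :=
        setLIntegral_mono' measurableSet_Ioc fun s hs ↦ mul_le_of_le_one_left' <|
          ofReal_le_one.mpr <| Real.exp_le_one_iff.mpr <| by nlinarith [hs.2]
    _ ≤ ∫⁻ s in Ioc 0 T, g s := lintegral_mono_set (Ioc_subset_Ioc_right htT)

lemma expConv_congr_ae {f : ℝ → ℝ≥0∞} {t T : ℝ} (hfg : f =ᵐ[volume.restrict (Ioc 0 T)] g)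
    (htT : t ≤ T) (x : ℝ) : expConv f t x = expConv g t x := by
  refine lintegral_congr_ae ?_
  filter_upwards [ae_restrict_of_ae_restrict_of_subset (Ioc_subset_Ioc_right htT) hfg] with s hs
  rw [hs]

lemma measurable_expConv (hg : Measurable g) :
    Measurable fun p : ℝ × ℝ ↦ expConv g p.1 p.2 := by
  have hS : MeasurableSet {q : (ℝ × ℝ) × ℝ | q.2 ∈ Ioc 0 q.1.1} :=
    (measurableSet_lt measurable_const measurable_snd).inter
      (measurableSet_le measurable_snd measurable_fst.fst)
  have hF : Measurable fun q : (ℝ × ℝ) × ℝ ↦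
      ENNReal.ofReal (Real.exp (-((q.1.1 - q.2) * q.1.2))) * g q.2 := by fun_prop
  unfold expConv
  simp_rw [← lintegral_indicator measurableSet_Ioc]
  exact (hF.indicator hS).lintegral_prod_right'

lemma lintegral_one_add_mul_expConv_le (hg : Measurable g) {x : ℝ} (hx : 0 ≤ x) (T : ℝ) :
    ∫⁻ t in Ioc 0 T, ENNReal.ofReal (1 + x) * expConv g t x
      ≤ ENNReal.ofReal (1 + T) * ∫⁻ s in Ioc 0 T, g s := by
  set K := (Icc 0 T).indicator fun v ↦ ENNReal.ofReal ((1 + x) * Real.exp (-(v * x)))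
  have hK : Measurable K := Measurable.indicator (by fun_prop) measurableSet_Icc
  have hpt : ∀ t ∈ Ioc 0 T,
      ENNReal.ofReal (1 + x) * expConv g t x ≤ ∫⁻ s, K (t - s) * (Ioc 0 T).indicator g s := by
    intro t ht
    rw [expConv, ← lintegral_const_mul' _ _ ofReal_ne_top, ← lintegral_indicator measurableSet_Ioc]
    refine lintegral_mono fun s ↦ ?_
    by_cases hs : s ∈ Ioc 0 t
    · have hts : t - s ∈ Icc 0 T := ⟨by linarith [hs.2], by linarith [hs.1, ht.2]⟩
      simp only [K]
      rw [indicator_of_mem hs, indicator_of_mem hts,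
        indicator_of_mem (Ioc_subset_Ioc_right ht.2 hs), ofReal_mul (by linarith), mul_assoc]
    · rw [indicator_of_notMem hs]
      exact bot_le
  calc ∫⁻ t in Ioc 0 T, ENNReal.ofReal (1 + x) * expConv g t x
      ≤ ∫⁻ t, ∫⁻ s, K (t - s) * (Ioc 0 T).indicator g s :=
        (setLIntegral_mono' measurableSet_Ioc hpt).trans (setLIntegral_le_lintegral _ _)
    _ = (∫⁻ v in Icc 0 T, ENNReal.ofReal ((1 + x) * Real.exp (-(v * x)))) *
          ∫⁻ s in Ioc 0 T, g s := by
        rw [lintegral_lintegral_mul_sub volume hK (hg.indicator measurableSet_Ioc),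
          lintegral_indicator measurableSet_Icc, lintegral_indicator measurableSet_Ioc]
    _ ≤ ENNReal.ofReal (1 + T) * ∫⁻ s in Ioc 0 T, g s := by
        gcongr
        exact lintegral_one_add_mul_exp_le hx T

variable {ν : Measure ℝ} [SFinite ν] {w : ℝ → ℝ}

lemma measurable_lintegral_weighted_expConv (hg : Measurable g) (hw : Measurable w) :
    Measurable fun t ↦
      ∫⁻ x, ENNReal.ofReal (w x) * (ENNReal.ofReal (1 + x) * expConv g t x) ∂ν := by
  have := measurable_expConv hg
  exact Measurable.lintegral_prod_right' (f := fun p : ℝ × ℝ ↦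
    ENNReal.ofReal (w p.2) * (ENNReal.ofReal (1 + p.2) * expConv g p.1 p.2)) (by fun_prop)

lemma lintegral_lintegral_weighted_expConv_le (hν : ∀ᵐ x ∂ν, 0 ≤ x) (hg : Measurable g)
    (hw : Measurable w) (T : ℝ) :
    ∫⁻ t in Ioc 0 T, ∫⁻ x, ENNReal.ofReal (w x) * (ENNReal.ofReal (1 + x) * expConv g t x) ∂ν
      ≤ ENNReal.ofReal (1 + T) * (∫⁻ x, ENNReal.ofReal (w x) ∂ν) * ∫⁻ s in Ioc 0 T, g s := by
  have := measurable_expConv hg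
  calc _ = ∫⁻ x, (∫⁻ t in Ioc 0 T,
          ENNReal.ofReal (w x) * (ENNReal.ofReal (1 + x) * expConv g t x)) ∂ν :=
        lintegral_lintegral_swap (by fun_prop)
    _ = ∫⁻ x, ENNReal.ofReal (w x) *
          (∫⁻ t in Ioc 0 T, ENNReal.ofReal (1 + x) * expConv g t x) ∂ν :=
        lintegral_congr fun x ↦ lintegral_const_mul _ (by fun_prop)
    _ ≤ ∫⁻ x, ENNReal.ofReal (w x) * (ENNReal.ofReal (1 + T) * ∫⁻ s in Ioc 0 T, g s) ∂ν := by
        refine lintegral_mono_ae (hν.mono fun x hx ↦ ?_)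
        gcongr
        exact lintegral_one_add_mul_expConv_le hg hx T
    _ = ENNReal.ofReal (1 + T) * (∫⁻ x, ENNReal.ofReal (w x) ∂ν) * ∫⁻ s in Ioc 0 T, g s := by
        rw [lintegral_mul_const _ (by fun_prop)]
        ring

end expConv

section convNormSq

variable {E : Type*} [NormedAddCommGroup E] [NormedSpace ℝ E]

/-- `‖B(t)‖_V²` for `B(t)(x) = ∫_0^t e^{-(t-s)x} b(s) ds`, with a general weight `w` and measure
`ν` in place of `ω` and `μ` restricted to `[0,∞)`. -/
noncomputable def convNormSq (ν : Measure ℝ) (w : ℝ → ℝ) (b : ℝ → E) (t : ℝ) : ℝ≥0∞ :=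
  ∫⁻ x, ENNReal.ofReal
    (‖∫ s in Ioc 0 t, Real.exp (-((t - s) * x)) • b s‖ ^ 2 * ((1 + x) * w x)) ∂ν

lemma ofReal_sq_norm_integral_exp_smul_mul_le {b : ℝ → E} {g : ℝ → ℝ≥0∞} {T t x : ℝ}
    (hbg : (fun s ↦ ‖b s‖ₑ) =ᵐ[volume.restrict (Ioc 0 T)] g) (htT : t ≤ T) (hx : 0 ≤ x)
    (w : ℝ) :
    ENNReal.ofReal (‖∫ s in Ioc 0 t, Real.exp (-((t - s) * x)) • b s‖ ^ 2 * ((1 + x) * w))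
      ≤ (∫⁻ s in Ioc 0 T, g s) *
        (ENNReal.ofReal w * (ENNReal.ofReal (1 + x) * expConv g t x)) := by
  set B := ∫ s in Ioc 0 t, Real.exp (-((t - s) * x)) • b s
  have hB : ‖B‖ₑ ≤ expConv g t x :=
    (enorm_integral_exp_smul_le_expConv b t x).trans_eq (expConv_congr_ae hbg htT x)
  calc ENNReal.ofReal (‖B‖ ^ 2 * ((1 + x) * w))
      = ‖B‖ₑ * (ENNReal.ofReal w * (ENNReal.ofReal (1 + x) * ‖B‖ₑ)) := by
        rw [ofReal_mul (by positivity), ofReal_mul (by linarith), ofReal_pow (norm_nonneg _),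
          ofReal_norm]
        ring
    _ ≤ (∫⁻ s in Ioc 0 T, g s) *
          (ENNReal.ofReal w * (ENNReal.ofReal (1 + x) * expConv g t x)) := by
        gcongr
        exact hB.trans (expConv_le_lintegral hx htT)

variable {ν : Measure ℝ} {w : ℝ → ℝ} {b : ℝ → E} {g : ℝ → ℝ≥0∞} {T : ℝ}

lemma convNormSq_le_mul_lintegral_weighted_expConv (hν : ∀ᵐ x ∂ν, 0 ≤ x)
    (hbg : (fun s ↦ ‖b s‖ₑ) =ᵐ[volume.restrict (Ioc 0 T)] g) (hg : Measurable g)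
    (hw : Measurable w) {t : ℝ} (htT : t ≤ T) :
    convNormSq ν w b t ≤ (∫⁻ s in Ioc 0 T, g s) *
      ∫⁻ x, ENNReal.ofReal (w x) * (ENNReal.ofReal (1 + x) * expConv g t x) ∂ν := by
  have := measurable_expConv hg
  rw [← lintegral_const_mul _ (by fun_prop)]
  exact lintegral_mono_ae <| hν.mono fun x hx ↦
    ofReal_sq_norm_integral_exp_smul_mul_le hbg htT hx (w x)

lemma lintegral_convNormSq_le [SFinite ν] (hν : ∀ᵐ x ∂ν, 0 ≤ x)
    (hb : AEStronglyMeasurable b (volume.restrict (Ioc 0 T))) (hw : Measurable w) :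
    ∫⁻ t in Ioc 0 T, convNormSq ν w b t
      ≤ ENNReal.ofReal (1 + T) * (∫⁻ x, ENNReal.ofReal (w x) ∂ν) *
        (∫⁻ s in Ioc 0 T, ‖b s‖ₑ) ^ 2 := by
  obtain ⟨g, hg, hbg⟩ := hb.enorm
  have hJ : ∫⁻ s in Ioc 0 T, g s = ∫⁻ s in Ioc 0 T, ‖b s‖ₑ := (lintegral_congr_ae hbg).symm
  calc ∫⁻ t in Ioc 0 T, convNormSq ν w b t
      ≤ ∫⁻ t in Ioc 0 T, (∫⁻ s in Ioc 0 T, g s) *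
          ∫⁻ x, ENNReal.ofReal (w x) * (ENNReal.ofReal (1 + x) * expConv g t x) ∂ν :=
        setLIntegral_mono' measurableSet_Ioc fun t ht ↦
          convNormSq_le_mul_lintegral_weighted_expConv hν hbg hg hw ht.2
    _ ≤ (∫⁻ s in Ioc 0 T, g s) * (ENNReal.ofReal (1 + T) *
          (∫⁻ x, ENNReal.ofReal (w x) ∂ν) * ∫⁻ s in Ioc 0 T, g s) := by
        rw [lintegral_const_mul _ (measurable_lintegral_weighted_expConv hg hw)]
        gcongr
        exact lintegral_lintegral_weighted_expConv_le hν hg hw T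
    _ = _ := by
        rw [hJ]
        ring

lemma ae_convNormSq_lt_top [SFinite ν] (hν : ∀ᵐ x ∂ν, 0 ≤ x) (hb : IntegrableOn b (Ioc 0 T))
    (hw : Measurable w) (hw_int : ∫⁻ x, ENNReal.ofReal (w x) ∂ν ≠ ∞) :
    ∀ᵐ t ∂volume.restrict (Ioc 0 T), convNormSq ν w b t < ∞ := by
  obtain ⟨g, hg, hbg⟩ := hb.aestronglyMeasurable.enorm
  have hJ : ∫⁻ s in Ioc 0 T, g s ≠ ∞ := by
    rw [← lintegral_congr_ae hbg]
    exact hb.2.ne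
  have hH := lintegral_lintegral_weighted_expConv_le hν hg hw T
  filter_upwards [ae_lt_top (measurable_lintegral_weighted_expConv hg hw)
    (hH.trans_lt (by finiteness)).ne, ae_restrict_mem measurableSet_Ioc] with t hHt ht
  exact (convNormSq_le_mul_lintegral_weighted_expConv hν hbg hg hw
    ht.2).trans_lt (mul_lt_top hJ.lt_top hHt)

end convNormSq

/-- If `b ∈ L¹(0,T;ℝ^d)`, then the convolution `B(t)(x) = ∫_0^t e^{-(t-s)x} b(s) ds`
belongs to `V` for a.e. `t ∈ [0,T]` and
`∫_0^T ‖B(t)‖_V² dt ≤ C(1/2 + T)(∫_0^T |b(s)| ds)²`, with `C` depending only on `μ`. -/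
theorem stmt_13 (μ : Measure ℝ) (d : ℕ) (T : ℝ) (hT : 0 < T)
    (hω : Integrable omg (μ.restrict (Ici 0)))
    (b : ℝ → EuclideanSpace ℝ (Fin d))
    (hb : IntegrableOn b (Ioc 0 T) volume) :
    ∃ C : ℝ, 0 ≤ C ∧
      (∀ᵐ t ∂(volume.restrict (Ioc (0:ℝ) T)),
        (∫⁻ x in Ici (0:ℝ),
            ENNReal.ofReal
              (‖∫ s in Ioc (0:ℝ) t, Real.exp (-((t - s) * x)) • b s‖ ^ 2 *
                ((1 + x) * omg x)) ∂μ) < ⊤) ∧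
      (∫⁻ t in Ioc (0:ℝ) T,
          ∫⁻ x in Ici (0:ℝ),
            ENNReal.ofReal
              (‖∫ s in Ioc (0:ℝ) t, Real.exp (-((t - s) * x)) • b s‖ ^ 2 *
                ((1 + x) * omg x)) ∂μ) ≤
        ENNReal.ofReal (C * (1/2 + T) * (∫ s in Ioc (0:ℝ) T, ‖b s‖) ^ 2) := by
  set Iω := ∫ x in Ici 0, omg x ∂μ
  have hIω : 0 ≤ Iω := integral_nonneg fun x ↦ (omg_pos x).le
  set I := ∫ s in Ioc 0 T, ‖b s‖
  have hI : 0 ≤ I := integral_nonneg fun s ↦ norm_nonneg _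
  have hW : ∫⁻ x in Ici 0, ENNReal.ofReal (omg x) ∂μ = ENNReal.ofReal Iω :=
    (ofReal_integral_eq_lintegral_ofReal hω (ae_of_all _ fun x ↦ (omg_pos x).le)).symm
  have : SigmaFinite (μ.restrict (Ici 0)) :=
    sigmaFinite_of_lintegral_ne_top_of_ne_zero (by fun_prop)
      (fun x ↦ (ofReal_pos.mpr (omg_pos x)).ne') (by rw [hW]; exact ofReal_ne_top)
  have hν : ∀ᵐ x ∂μ.restrict (Ici 0), 0 ≤ x := ae_restrict_mem measurableSet_Ici
  refine ⟨2 * Iω, by positivity,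
    ae_convNormSq_lt_top hν hb measurable_omg (by rw [hW]; exact ofReal_ne_top),
    (lintegral_convNormSq_le hν hb.aestronglyMeasurable measurable_omg).trans ?_⟩
  rw [hW, ← ofReal_integral_norm_eq_lintegral_enorm hb, ← ofReal_mul (by positivity),
    ← ofReal_pow hI, ← ofReal_mul (by positivity)]
  exact ofReal_le_ofReal (by nlinarith [mul_nonneg (mul_nonneg hT.le hIω) (sq_nonneg I)])
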